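/- Let β > 0. Then there exist λ ∈ ℝ and φ indexed by Fin m × Fin n with φ (i,j) > 0 for all (i,j) such that D φ + β φ³ = λ φ and h₁ h₂ · φᵀφ = 1; moreover the pair (λ, φ) with these properties is unique. -/

import Mathlib

/-!
Minimize the energy `ψᵀ D ψ + (β/2) ∑ ψ⁴` on the sphere `∑ ψ² = c`. The off-diagonal entries of `D`
are nonpositive, so replacing a minimizer by its absolute value does not increase the energy, and
the Lagrange multiplier rule turns this nonnegative minimizer into an eigenpair. A nonnegative
eigenvector vanishing at a grid point also vanishes at its neighbours, and the grid is connected,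
so the minimizer is positive.

Uniqueness is a discrete Picone (Díaz–Saa) argument: for positive `φ, ψ` the quantity
`∑ (φ - ψ²/φ) (Dφ) + (ψ - φ²/ψ) (Dψ)` is nonnegative, while for two normalized eigenvectors it
equals `-β ∑ (φ² - ψ²)²`.
-/

open Finset Matrix SimpleGraph

namespace GrossPitaevskii

section General

variable {ι : Type*} [Fintype ι] {D : Matrix ι ι ℝ} {β μ ν : ℝ} {φ ψ : ι → ℝ}

theorem sum_sum_nonneg_of_add_swap_nonneg (G : ι → ι → ℝ) (h : ∀ p q, 0 ≤ G p q + G q p) :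
    0 ≤ ∑ p, ∑ q, G p q := by
  have hswap : ∑ p, ∑ q, (G p q + G q p) = 2 * ∑ p, ∑ q, G p q := by
    simp only [sum_add_distrib]
    rw [sum_comm (f := fun p q => G q p)]
    ring
  have := sum_nonneg fun p (_ : p ∈ univ) => sum_nonneg fun q (_ : q ∈ univ) => h p q
  linarith

theorem picone_cross_terms_eq {a b x y : ℝ} (ha : a ≠ 0) (hb : b ≠ 0) (hx : x ≠ 0) (hy : y ≠ 0) :
    b * (a - x ^ 2 / a) + y * (x - a ^ 2 / x) + (a * (b - y ^ 2 / b) + x * (y - b ^ 2 / y)) =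
      -((b * x - a * y) ^ 2 * (1 / (a * b) + 1 / (x * y))) := by
  field_simp
  ring

theorem picone_nonneg (hD : D.IsSymm) (hoff : ∀ p q, p ≠ q → D p q ≤ 0)
    (hφ : ∀ q, 0 < φ q) (hψ : ∀ q, 0 < ψ q) :
    0 ≤ ∑ p, ((φ p - ψ p ^ 2 / φ p) * (D *ᵥ φ) p + (ψ p - φ p ^ 2 / ψ p) * (D *ᵥ ψ) p) := by
  set G : ι → ι → ℝ := fun p q =>
    D p q * (φ q * (φ p - ψ p ^ 2 / φ p) + ψ q * (ψ p - φ p ^ 2 / ψ p))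
  have hG : ∑ p, ((φ p - ψ p ^ 2 / φ p) * (D *ᵥ φ) p + (ψ p - φ p ^ 2 / ψ p) * (D *ᵥ ψ) p) =
      ∑ p, ∑ q, G p q := by
    refine sum_congr rfl fun p _ => ?_
    simp only [G, mulVec, dotProduct, mul_sum, ← sum_add_distrib]
    exact sum_congr rfl fun q _ => by ring
  rw [hG]
  refine sum_sum_nonneg_of_add_swap_nonneg G fun p q => ?_
  have hGpq : G p q + G q p = D p q * -((φ q * ψ p - φ p * ψ q) ^ 2 *
      (1 / (φ p * φ q) + 1 / (ψ p * ψ q))) := by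
    simp only [G, hD.apply p q]
    rw [← picone_cross_terms_eq (hφ p).ne' (hφ q).ne' (hψ p).ne' (hψ q).ne']
    ring
  rw [hGpq]
  rcases eq_or_ne p q with rfl | hpq
  · simp
  · refine mul_nonneg_of_nonpos_of_nonpos (hoff p q hpq) (neg_nonpos.2 ?_)
    have := hφ p; have := hφ q; have := hψ p; have := hψ q
    positivity

theorem mulVec_apply_eq_of_eigen (heq : D *ᵥ φ + β • (fun q => φ q ^ 3) = μ • φ) (p : ι) :
    (D *ᵥ φ) p = μ * φ p - β * φ p ^ 3 := by
  have := congrFun heq p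
  simp only [Pi.add_apply, Pi.smul_apply, smul_eq_mul] at this
  linarith

theorem eq_of_pos_eigen [Nonempty ι] (hD : D.IsSymm) (hoff : ∀ p q, p ≠ q → D p q ≤ 0)
    (hβ : 0 < β) (hφ : ∀ q, 0 < φ q) (hψ : ∀ q, 0 < ψ q)
    (heqφ : D *ᵥ φ + β • (fun q => φ q ^ 3) = μ • φ)
    (heqψ : D *ᵥ ψ + β • (fun q => ψ q ^ 3) = ν • ψ)
    (hnorm : ∑ q, φ q ^ 2 = ∑ q, ψ q ^ 2) : μ = ν ∧ φ = ψ := by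
  have hterm : ∀ p, (φ p - ψ p ^ 2 / φ p) * (D *ᵥ φ) p + (ψ p - φ p ^ 2 / ψ p) * (D *ᵥ ψ) p =
      μ * (φ p ^ 2 - ψ p ^ 2) + ν * (ψ p ^ 2 - φ p ^ 2) - β * (φ p ^ 2 - ψ p ^ 2) ^ 2 := by
    intro p
    rw [mulVec_apply_eq_of_eigen heqφ, mulVec_apply_eq_of_eigen heqψ]
    have := (hφ p).ne'; have := (hψ p).ne'
    field_simp
    ring
  have hpicone : 0 ≤ -(β * ∑ p, (φ p ^ 2 - ψ p ^ 2) ^ 2) := by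
    have := picone_nonneg hD hoff hφ hψ
    rw [sum_congr rfl fun p _ => hterm p, sum_sub_distrib, sum_add_distrib, ← mul_sum,
      ← mul_sum, ← mul_sum, sum_sub_distrib, sum_sub_distrib, hnorm] at this
    linarith
  have hsq : ∑ p, (φ p ^ 2 - ψ p ^ 2) ^ 2 = 0 :=
    le_antisymm (nonpos_of_mul_nonpos_right (by linarith) hβ)
      (sum_nonneg fun _ _ => sq_nonneg _)
  have hφψ : φ = ψ := funext fun p => by
    have := (sum_eq_zero_iff_of_nonneg fun _ _ => sq_nonneg _).1 hsq p (mem_univ p)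
    exact (sq_eq_sq₀ (hφ p).le (hψ p).le).1 (sub_eq_zero.1 (pow_eq_zero_iff two_ne_zero |>.1 this))
  obtain ⟨p⟩ := ‹Nonempty ι›
  have := mulVec_apply_eq_of_eigen heqφ p
  rw [hφψ, mulVec_apply_eq_of_eigen heqψ] at this
  exact ⟨(mul_right_cancel₀ (hψ p).ne' (by linarith)).symm, hφψ⟩

theorem isCompact_setOf_sum_sq_eq (c : ℝ) : IsCompact {ψ : ι → ℝ | ∑ q, ψ q ^ 2 = c} := by
  refine Metric.isCompact_of_isClosed_isBounded
    (isClosed_eq (by fun_prop) continuous_const) ?_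
  refine (Metric.isBounded_closedBall (x := 0) (r := √c)).subset fun ψ (hψ : _ = c) => ?_
  rw [Metric.mem_closedBall, dist_zero_right, pi_norm_le_iff_of_nonneg (Real.sqrt_nonneg c)]
  refine fun q => Real.abs_le_sqrt ?_
  rw [← hψ]
  exact single_le_sum (fun q _ => sq_nonneg (ψ q)) (mem_univ q)

variable (D β) in
noncomputable def energy (ψ : ι → ℝ) : ℝ :=
  ∑ p, ∑ q, D p q * ψ p * ψ q + β / 2 * ∑ q, ψ q ^ 4

theorem energy_abs_le (hoff : ∀ p q, p ≠ q → D p q ≤ 0) (ψ : ι → ℝ) :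
    energy D β |ψ| ≤ energy D β ψ := by
  have hquartic : ∑ q, |ψ q| ^ 4 = ∑ q, ψ q ^ 4 :=
    sum_congr rfl fun q _ => (even_two_mul 2).pow_abs (ψ q)
  simp only [energy, Pi.abs_apply, hquartic, add_le_add_iff_right]
  refine sum_le_sum fun p _ => sum_le_sum fun q _ => ?_
  rcases eq_or_ne p q with rfl | hpq
  · rw [mul_assoc, mul_assoc, abs_mul_abs_self]
  · rw [mul_assoc, mul_assoc, ← abs_mul]
    exact mul_le_mul_of_nonpos_left (le_abs_self _) (hoff p q hpq)

theorem exists_isMinOn_energy [Nonempty ι] {c : ℝ} (hc : 0 ≤ c) :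
    ∃ φ ∈ {ψ : ι → ℝ | ∑ q, ψ q ^ 2 = c}, IsMinOn (energy D β) {ψ | ∑ q, ψ q ^ 2 = c} φ := by
  refine (isCompact_setOf_sum_sq_eq c).exists_isMinOn ⟨fun _ => √(c / Fintype.card ι), ?_⟩
    (by unfold energy; fun_prop)
  have : (0 : ℝ) < Fintype.card ι := by exact_mod_cast Fintype.card_pos
  show ∑ _q, _ = c
  simp only [sum_const, card_univ, nsmul_eq_mul,
    Real.sq_sqrt (div_nonneg hc this.le)]
  field_simp

theorem hasStrictFDerivAt_sum_sq (φ : ι → ℝ) :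
    HasStrictFDerivAt (fun ψ : ι → ℝ => ∑ q, ψ q ^ 2)
      (∑ q, (2 * φ q) • ContinuousLinearMap.proj (R := ℝ) (φ := fun _ : ι => ℝ) q) φ := by
  refine (HasStrictFDerivAt.fun_sum fun q _ => (hasStrictFDerivAt_apply q φ).pow 2).congr_fderiv ?_
  simp

theorem hasStrictFDerivAt_energy (hD : D.IsSymm) (φ : ι → ℝ) :
    HasStrictFDerivAt (energy D β) (∑ q, (2 * ((D *ᵥ φ) q + β * φ q ^ 3)) •
      ContinuousLinearMap.proj (R := ℝ) (φ := fun _ : ι => ℝ) q) φ := by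
  classical
  refine ((HasStrictFDerivAt.fun_sum fun p _ => HasStrictFDerivAt.fun_sum fun q _ =>
    (((hasStrictFDerivAt_apply p φ).const_mul (D p q)).fun_mul (hasStrictFDerivAt_apply q φ))).add
    ((HasStrictFDerivAt.fun_sum fun q _ =>
      (hasStrictFDerivAt_apply q φ).pow 4).const_mul _)).congr_fderiv ?_
  refine ContinuousLinearMap.coe_injective (LinearMap.pi_ext fun r x => ?_)
  simp [Pi.single_apply, mulVec, dotProduct, mul_add, sum_add_distrib, hD.apply r]
  have hswap : ∑ q, φ q * (D r q * x) = ∑ q, D r q * φ q * x :=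
    sum_congr rfl fun _ _ => by ring
  rw [hswap, ← sum_mul]
  ring

theorem exists_eigen_of_isMinOn (hD : D.IsSymm) (hφ : φ ≠ 0)
    (hmin : IsMinOn (energy D β) {ψ | ∑ q, ψ q ^ 2 = ∑ q, φ q ^ 2} φ) :
    ∃ μ : ℝ, D *ᵥ φ + β • (fun q => φ q ^ 3) = μ • φ := by
  classical
  obtain ⟨a, b, hab, hlin⟩ := IsLocalExtrOn.exists_multipliers_of_hasStrictFDerivAt_1d
    (Or.inl hmin.localize) (hasStrictFDerivAt_sum_sq φ) (hasStrictFDerivAt_energy (β := β) hD φ)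
  have hcoord : ∀ r, a * (2 * φ r) + b * (2 * ((D *ᵥ φ) r + β * φ r ^ 3)) = 0 := fun r => by
    simpa [Pi.single_apply] using congrArg (fun L => L (Pi.single r 1)) hlin
  have hb : b ≠ 0 := by
    rintro rfl
    have ha : a ≠ 0 := by simpa using hab
    exact hφ (funext fun r => by simpa [ha] using hcoord r)
  refine ⟨-a / b, funext fun r => ?_⟩
  simp only [Pi.add_apply, Pi.smul_apply, smul_eq_mul]
  field_simp
  linear_combination hcoord r / 2

theorem eq_zero_of_eigen_of_eq_zero (hoff : ∀ p q, p ≠ q → D p q ≤ 0) (hφ : ∀ q, 0 ≤ φ q)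
    (heq : D *ᵥ φ + β • (fun q => φ q ^ 3) = μ • φ) {a b : ι} (ha : φ a = 0) (hab : D a b < 0) :
    φ b = 0 := by
  have hterm : ∀ q ∈ univ, D a q * φ q ≤ 0 := fun q _ => by
    rcases eq_or_ne a q with rfl | haq
    · simp [ha]
    · exact mul_nonpos_of_nonpos_of_nonneg (hoff a q haq) (hφ q)
  have hsum : ∑ q, D a q * φ q = 0 := by
    simpa [ha, mulVec, dotProduct] using mulVec_apply_eq_of_eigen heq a
  have := (sum_eq_zero_iff_of_nonpos hterm).1 hsum b (mem_univ b)
  exact (mul_eq_zero.1 this).resolve_left hab.ne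

theorem pos_of_nonneg_eigen {G : SimpleGraph ι} (hG : G.Preconnected)
    (hoff : ∀ p q, p ≠ q → D p q ≤ 0) (hadj : ∀ p q, G.Adj p q → D p q < 0)
    (hφ : ∀ q, 0 ≤ φ q) (hφ0 : φ ≠ 0) (heq : D *ᵥ φ + β • (fun q => φ q ^ 3) = μ • φ) :
    ∀ q, 0 < φ q := by
  by_contra! h
  obtain ⟨a, ha⟩ := h
  refine hφ0 (funext fun b => ?_)
  induction (reachable_iff_reflTransGen a b).1 (hG a b) with
  | refl => exact le_antisymm ha (hφ a)
  | tail _ hbc ih => exact eq_zero_of_eigen_of_eq_zero hoff hφ heq ih (hadj _ _ hbc)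

theorem exists_nonneg_eigen [Nonempty ι] (hD : D.IsSymm) (hoff : ∀ p q, p ≠ q → D p q ≤ 0)
    {c : ℝ} (hc : 0 < c) :
    ∃ (μ : ℝ) (φ : ι → ℝ), (∀ q, 0 ≤ φ q) ∧ ∑ q, φ q ^ 2 = c ∧
      D *ᵥ φ + β • (fun q => φ q ^ 3) = μ • φ := by
  obtain ⟨φ, hφ, hmin⟩ := exists_isMinOn_energy (D := D) (β := β) hc.le
  have hnorm : ∑ q, |φ| q ^ 2 = c := by simpa using hφ
  have hmin_abs : IsMinOn (energy D β) {ψ | ∑ q, ψ q ^ 2 = ∑ q, |φ| q ^ 2} |φ| := by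
    rw [hnorm]
    exact isMinOn_iff.2 fun ψ hψ => (energy_abs_le hoff φ).trans (isMinOn_iff.1 hmin ψ hψ)
  have hne : |φ| ≠ 0 := fun h => by rw [h] at hnorm; simp at hnorm; linarith
  obtain ⟨μ, hμ⟩ := exists_eigen_of_isMinOn hD hne hmin_abs
  exact ⟨μ, |φ|, fun q => abs_nonneg (φ q), hnorm, hμ⟩

theorem existsUnique_pos_eigenpair [Nonempty ι] {G : SimpleGraph ι} (hG : G.Preconnected)
    (hD : D.IsSymm) (hoff : ∀ p q, p ≠ q → D p q ≤ 0) (hadj : ∀ p q, G.Adj p q → D p q < 0)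
    (hβ : 0 < β) {c : ℝ} (hc : 0 < c) :
    ∃! p : ℝ × (ι → ℝ), (∀ q, 0 < p.2 q) ∧
      D *ᵥ p.2 + β • (fun q => p.2 q ^ 3) = p.1 • p.2 ∧ ∑ q, p.2 q ^ 2 = c := by
  obtain ⟨μ, φ, hφ, hnorm, heq⟩ := exists_nonneg_eigen (β := β) hD hoff hc
  have hφ0 : φ ≠ 0 := fun h => by rw [h] at hnorm; simp at hnorm; linarith
  have hpos := pos_of_nonneg_eigen hG hoff hadj hφ hφ0 heq
  refine ⟨(μ, φ), ⟨hpos, heq, hnorm⟩, fun ⟨ν, ψ⟩ ⟨hψ, heqψ, hnormψ⟩ => ?_⟩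
  obtain ⟨rfl, rfl⟩ := eq_of_pos_eigen hD hoff hβ hψ hpos heqψ heq (hnormψ.trans hnorm.symm)
  rfl

end General

section Grid

variable {m n : ℕ} {h₁ h₂ : ℝ}

theorem pathGraph_adj_iff_abs_sub_eq_one {k : ℕ} {i j : Fin k} :
    (pathGraph k).Adj i j ↔ |(i : ℤ) - (j : ℤ)| = 1 := by
  rw [pathGraph_adj, abs_eq zero_le_one]
  omega

variable (h₁ h₂) in
noncomputable def gridCoupling (p q : Fin m × Fin n) : ℝ :=
  if p.1 = q.1 ∧ |(p.2 : ℤ) - (q.2 : ℤ)| = 1 then -(1 / (2 * h₂ ^ 2))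
  else if p.2 = q.2 ∧ |(p.1 : ℤ) - (q.1 : ℤ)| = 1 then -(1 / (2 * h₁ ^ 2))
  else 0

theorem eq_gridCoupling {D : Matrix (Fin m × Fin n) (Fin m × Fin n) ℝ}
    (hDvert : ∀ (i : Fin m) (j j' : Fin n), |(j : ℤ) - (j' : ℤ)| = 1 →
      D (i, j) (i, j') = -(1 / (2 * h₂ ^ 2)))
    (hDhor : ∀ (i i' : Fin m) (j : Fin n), |(i : ℤ) - (i' : ℤ)| = 1 →
      D (i, j) (i', j) = -(1 / (2 * h₁ ^ 2)))
    (hDzero : ∀ p q : Fin m × Fin n, p ≠ q →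
      ¬(p.1 = q.1 ∧ |(p.2 : ℤ) - (q.2 : ℤ)| = 1) →
      ¬(p.2 = q.2 ∧ |(p.1 : ℤ) - (q.1 : ℤ)| = 1) → D p q = 0)
    {p q : Fin m × Fin n} (hpq : p ≠ q) : D p q = gridCoupling h₁ h₂ p q := by
  obtain ⟨i, j⟩ := p
  obtain ⟨i', j'⟩ := q
  unfold gridCoupling
  split_ifs with hvert hhor
  · obtain ⟨rfl, h⟩ := hvert
    exact hDvert i j j' h
  · obtain ⟨rfl, h⟩ := hhor
    exact hDhor i i' j h
  · exact hDzero _ _ hpq hvert hhor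

theorem gridCoupling_comm (p q : Fin m × Fin n) :
    gridCoupling h₁ h₂ p q = gridCoupling h₁ h₂ q p := by
  simp only [gridCoupling, abs_sub_comm (p.2 : ℤ), abs_sub_comm (p.1 : ℤ), @eq_comm _ p.1,
    @eq_comm _ p.2]

theorem gridCoupling_nonpos (p q : Fin m × Fin n) : gridCoupling h₁ h₂ p q ≤ 0 := by
  unfold gridCoupling
  split_ifs <;> simp only [neg_nonpos, le_refl] <;> positivity

theorem gridCoupling_neg_of_adj (hh₁ : h₁ ≠ 0) (hh₂ : h₂ ≠ 0) {p q : Fin m × Fin n}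
    (hpq : (pathGraph m □ pathGraph n).Adj p q) : gridCoupling h₁ h₂ p q < 0 := by
  rw [boxProd_adj, pathGraph_adj_iff_abs_sub_eq_one, pathGraph_adj_iff_abs_sub_eq_one] at hpq
  unfold gridCoupling
  split_ifs with hvert hhor
  · simp only [neg_lt_zero]; positivity
  · simp only [neg_lt_zero]; positivity
  · tauto

theorem isSymm_of_eq_gridCoupling {D : Matrix (Fin m × Fin n) (Fin m × Fin n) ℝ}
    (hD : ∀ p q, p ≠ q → D p q = gridCoupling h₁ h₂ p q) : D.IsSymm :=
  IsSymm.ext fun p q => by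
    rcases eq_or_ne p q with rfl | hpq
    · rfl
    · rw [hD q p hpq.symm, hD p q hpq, gridCoupling_comm]

end Grid

end GrossPitaevskii

open GrossPitaevskii

theorem stmt_7 (m n : ℕ) (hm : 1 ≤ m) (hn : 1 ≤ n)
    (h₁ h₂ : ℝ) (hh₁ : 0 < h₁) (hh₂ : 0 < h₂)
    (D : Matrix (Fin m × Fin n) (Fin m × Fin n) ℝ)
    (hDvert : ∀ (i : Fin m) (j j' : Fin n), |(j : ℤ) - (j' : ℤ)| = 1 →
      D (i, j) (i, j') = -(1 / (2 * h₂ ^ 2)))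
    (hDhor : ∀ (i i' : Fin m) (j : Fin n), |(i : ℤ) - (i' : ℤ)| = 1 →
      D (i, j) (i', j) = -(1 / (2 * h₁ ^ 2)))
    (hDzero : ∀ p q : Fin m × Fin n, p ≠ q →
      ¬(p.1 = q.1 ∧ |(p.2 : ℤ) - (q.2 : ℤ)| = 1) →
      ¬(p.2 = q.2 ∧ |(p.1 : ℤ) - (q.1 : ℤ)| = 1) → D p q = 0)
    (β : ℝ) (hβ : 0 < β) :
    ∃! p : ℝ × (Fin m × Fin n → ℝ), (∀ q, 0 < p.2 q) ∧
      D.mulVec p.2 + β • (fun q => p.2 q ^ 3) = p.1 • p.2 ∧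
      h₁ * h₂ * (∑ q, p.2 q ^ 2) = 1 := by
  have : Nonempty (Fin m × Fin n) := ⟨(⟨0, hm⟩, ⟨0, hn⟩)⟩
  have hD : ∀ p q, p ≠ q → D p q = gridCoupling h₁ h₂ p q :=
    fun _ _ => eq_gridCoupling hDvert hDhor hDzero
  have hoff : ∀ p q, p ≠ q → D p q ≤ 0 :=
    fun p q hpq => (hD p q hpq).trans_le (gridCoupling_nonpos p q)
  have hadj : ∀ p q, (pathGraph m □ pathGraph n).Adj p q → D p q < 0 := fun p q hpq =>
    (hD p q hpq.ne).trans_lt (gridCoupling_neg_of_adj hh₁.ne' hh₂.ne' hpq)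
  have hK : h₁ * h₂ ≠ 0 := (mul_pos hh₁ hh₂).ne'
  refine (existsUnique_congr fun p => ?_).2 <| existsUnique_pos_eigenpair
    ((pathGraph_preconnected m).boxProd (pathGraph_preconnected n))
    (isSymm_of_eq_gridCoupling hD) hoff hadj hβ (inv_pos.2 (mul_pos hh₁ hh₂))
  rw [mul_eq_one_iff_inv_eq₀ hK, @eq_comm _ (h₁ * h₂)⁻¹]
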